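/- Combined coverage: Let f(A, X) = 𝟙ᵀ(A + (1+ε)I)·X·Θ with D + N + Nε ≠ 0 for the fixed input (A, X), D = Σ_{ij}A_{ij}. Then for any A' ∈ ℝ^{N×N} and any X' ∈ ℝ^{N×F}, there exists a row vector p ∈ ℝ^{1×F} with f(A, X + 𝟙·p) = f(A', X'). That is, GPF can simultaneously achieve any change of structure and features. -/

import Mathlib

open Matrix BigOperators

/-- One-layer linear GIN with sum readout: 𝟙ᵀ (A + (1+ε) I) X Θ as a row vector. -/
noncomputable def gin {n : Type*} [Fintype n] [DecidableEq n] {F Fp : ℕ}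
    (ε : ℝ) (Θ : Matrix (Fin F) (Fin Fp) ℝ)
    (A : Matrix n n ℝ) (X : Matrix n (Fin F) ℝ) : Fin Fp → ℝ :=
  fun j => ∑ i, ((A + (1 + ε) • (1 : Matrix n n ℝ)) * X * Θ) i j

/-- 𝟙·p : the matrix each of whose rows is the row vector p. -/
def prompt (n : Type*) {F : ℕ} (p : Fin F → ℝ) : Matrix n (Fin F) ℝ :=
  Matrix.of fun _ j => p j

/-! Since the readout is linear and every row of `𝟙·p` equals `p`, the prompt shifts the
pre-readout row vector `𝟙ᵀ(A + (1+ε)I)X` by `s • p`, where `s = D + N(1+ε)` is the entry sum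
of `A + (1+ε)I`. When `s ≠ 0` any target row vector, in particular `𝟙ᵀ(A' + (1+ε)I)X'`, is
reached by `p = s⁻¹ • (target - current)`. -/

section

variable {n : Type*} [Fintype n]

theorem gin_eq_vecMul [DecidableEq n] {F Fp : ℕ} (ε : ℝ) (Θ : Matrix (Fin F) (Fin Fp) ℝ)
    (A : Matrix n n ℝ) (X : Matrix n (Fin F) ℝ) :
    gin ε Θ A X = 1 ᵥ* (A + (1 + ε) • (1 : Matrix n n ℝ)) ᵥ* X ᵥ* Θ := by
  rw [vecMul_vecMul, vecMul_vecMul]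
  funext j
  simp [gin, vecMul, dotProduct, Matrix.mul_assoc]

theorem vecMul_add_prompt {F : ℕ} (w : n → ℝ) (X : Matrix n (Fin F) ℝ) (p : Fin F → ℝ) :
    w ᵥ* (X + prompt n p) = w ᵥ* X + (∑ i, w i) • p := by
  funext j
  simp [vecMul, dotProduct, prompt, mul_add, Finset.sum_add_distrib, Finset.sum_mul]

theorem sum_one_vecMul_add_smul_one [DecidableEq n] (A : Matrix n n ℝ) (a : ℝ) :
    ∑ j, (1 ᵥ* (A + a • (1 : Matrix n n ℝ))) j = ∑ i, ∑ j, A i j + Fintype.card n * a := by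
  simp [vecMul, dotProduct, Finset.sum_add_distrib, Matrix.one_apply, Finset.sum_comm (γ := n)]

end

theorem stmt8 (N F Fp : ℕ) (A A' : Matrix (Fin N) (Fin N) ℝ)
    (X X' : Matrix (Fin N) (Fin F) ℝ) (ε : ℝ) (Θ : Matrix (Fin F) (Fin Fp) ℝ)
    (hD : (∑ i, ∑ j, A i j) + N + N * ε ≠ 0) :
    ∃ p : Fin F → ℝ, gin ε Θ A (X + prompt (Fin N) p) = gin ε Θ A' X' := by
  set w : Fin N → ℝ := 1 ᵥ* (A + (1 + ε) • (1 : Matrix (Fin N) (Fin N) ℝ))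
  set w' : Fin N → ℝ := 1 ᵥ* (A' + (1 + ε) • (1 : Matrix (Fin N) (Fin N) ℝ))
  have hs : ∑ i, w i ≠ 0 := by
    rw [sum_one_vecMul_add_smul_one, Fintype.card_fin]
    convert hD using 1
    ring
  refine ⟨(∑ i, w i)⁻¹ • (w' ᵥ* X' - w ᵥ* X), ?_⟩
  rw [gin_eq_vecMul, gin_eq_vecMul, vecMul_add_prompt, smul_smul, mul_inv_cancel₀ hs, one_smul,
    add_sub_cancel]
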